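/- Let $z$ be an $N \times N$ complex self-adjoint matrix and $t$ an invertible upper triangular matrix. If for some $k$ and $k$-subsets $I, J$ of $\{1,\dots,N\}$ all minors $z_{I',J'}$ with $(J',I')$ lexicographically smaller than $(J,I)$ vanish, then all minors $(t^* z t)_{I',J'}$ with $(J',I')$ lexicographically smaller than $(J,I)$ also vanish. -/
import Mathlib


open Matrix

/-- Minor of `X` with rows `A` and columns `B` (increasing order); junk `0` if cards differ. -/
noncomputable def minorC {N : ℕ} (X : Matrix (Fin N) (Fin N) ℂ) (A B : Finset (Fin N)) : ℂ :=
  if h : B.card = A.card then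
    Matrix.det (Matrix.of fun (a b : Fin A.card) =>
      X (A.orderEmbOfFin rfl a) (B.orderEmbOfFin h b))
  else 0

/-- Lexicographic order on subsets. -/
def finsetLexLt {N : ℕ} (A B : Finset (Fin N)) : Prop :=
  ∃ h : A.card = B.card, ∃ p : Fin A.card,
    (∀ q : Fin A.card, q < p → A.orderEmbOfFin rfl q ≤ B.orderEmbOfFin h.symm q) ∧
    A.orderEmbOfFin rfl p < B.orderEmbOfFin h.symm p

/-- Lexicographic order on pairs `(J, I)`: compare `J` first, then `I`. -/
def pairLexLt {N : ℕ} (J' I' J I : Finset (Fin N)) : Prop :=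
  finsetLexLt J' J ∨ (J' = J ∧ finsetLexLt I' I)

lemma emb_cast {N m k : ℕ} (A : Finset (Fin N)) (h : A.card = m) (h' : A.card = k)
    (e : k = m) (p : Fin k) :
    A.orderEmbOfFin h (Fin.cast e p) = A.orderEmbOfFin h' p := by
  have hmono : StrictMono (fun q : Fin k => A.orderEmbOfFin h (Fin.cast e q)) := by
    intro a b hab
    exact (A.orderEmbOfFin h).strictMono (by rw [Fin.lt_def, Fin.coe_cast, Fin.coe_cast]; exact hab)
  have := Finset.orderEmbOfFin_unique h'
    (f := fun q : Fin k => A.orderEmbOfFin h (Fin.cast e q))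
    (fun x => Finset.orderEmbOfFin_mem _ _ _) hmono
  exact congrFun this p

lemma lex_iff {N k : ℕ} {A B : Finset (Fin N)} (hA : A.card = k) (hB : B.card = k) :
    finsetLexLt A B ↔ ∃ p : Fin k,
      (∀ q : Fin k, q < p → A.orderEmbOfFin hA q ≤ B.orderEmbOfFin hB q) ∧
      A.orderEmbOfFin hA p < B.orderEmbOfFin hB p := by
  have hAB : A.card = B.card := hA.trans hB.symm
  constructor
  · rintro ⟨h, p, hq, hp⟩
    refine ⟨Fin.cast hA p, fun q hq' => ?_, ?_⟩
    · have h1 := hq (Fin.cast hA.symm q)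
        (by rw [Fin.lt_def, Fin.coe_cast]; rw [Fin.lt_def, Fin.coe_cast] at hq'; exact hq')
      rwa [emb_cast A rfl hA hA.symm, emb_cast B h.symm hB hA.symm] at h1
    · have h1 := hp
      rw [show p = Fin.cast hA.symm (Fin.cast hA p) by ext; simp] at h1
      rwa [emb_cast A rfl hA hA.symm, emb_cast B h.symm hB hA.symm] at h1
  · rintro ⟨p, hq, hp⟩
    refine ⟨hAB, Fin.cast hA.symm p, fun q hq' => ?_, ?_⟩
    · have h1 := hq (Fin.cast hA q)
        (by rw [Fin.lt_def, Fin.coe_cast]; rw [Fin.lt_def, Fin.coe_cast] at hq'; exact hq')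
      rw [show q = Fin.cast hA.symm (Fin.cast hA q) by ext; simp]
      rwa [emb_cast A rfl hA hA.symm, emb_cast B hAB.symm hB hA.symm]
    · rw [emb_cast A rfl hA hA.symm, emb_cast B hAB.symm hB hA.symm]
      exact hp

lemma le_lex_trans {N k : ℕ} {X Y Z : Finset (Fin N)} (hX : X.card = k) (hY : Y.card = k)
    (hZ : Z.card = k) (hle : ∀ p : Fin k, X.orderEmbOfFin hX p ≤ Y.orderEmbOfFin hY p)
    (h : finsetLexLt Y Z) : finsetLexLt X Z := by
  rw [lex_iff hY hZ] at h
  rw [lex_iff hX hZ]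
  obtain ⟨p, hq, hp⟩ := h
  exact ⟨p, fun q hq' => (hle q).trans (hq q hq'), (hle p).trans_lt hp⟩

lemma le_ne_lex {N k : ℕ} {X Y : Finset (Fin N)} (hX : X.card = k) (hY : Y.card = k)
    (hle : ∀ p : Fin k, X.orderEmbOfFin hX p ≤ Y.orderEmbOfFin hY p)
    (hne : X ≠ Y) : finsetLexLt X Y := by
  rw [lex_iff hX hY]
  classical
  set S : Finset (Fin k) := Finset.univ.filter
    (fun p => X.orderEmbOfFin hX p ≠ Y.orderEmbOfFin hY p) with hS
  have hSne : S.Nonempty := by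
    by_contra hcon
    rw [Finset.not_nonempty_iff_eq_empty] at hcon
    have hall : ∀ p : Fin k, X.orderEmbOfFin hX p = Y.orderEmbOfFin hY p := by
      intro p
      by_contra hne'
      have : p ∈ S := by simp [hS, hne']
      simp [hcon] at this
    apply hne
    have hr : Set.range (X.orderEmbOfFin hX) = Set.range (Y.orderEmbOfFin hY) := by
      exact congrArg Set.range (funext hall)
    rw [Finset.range_orderEmbOfFin, Finset.range_orderEmbOfFin] at hr
    exact_mod_cast Finset.coe_inj.mp hr
  refine ⟨S.min' hSne, fun q hq => ?_, ?_⟩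
  · have hq' : q ∉ S := fun hmem => absurd (S.min'_le q hmem) (not_le.mpr hq)
    simp only [hS, Finset.mem_filter, Finset.mem_univ, true_and, not_not] at hq'
    exact le_of_eq hq'
  · have hmem := S.min'_mem hSne
    simp only [hS, Finset.mem_filter, Finset.mem_univ, true_and] at hmem
    exact lt_of_le_of_ne (hle _) hmem

lemma factor {N k : ℕ} (g : Fin k → Fin N) (hg : Function.Injective g) :
    ∃ (A : Finset (Fin N)) (hA : A.card = k) (σ : Equiv.Perm (Fin k)),
      ∀ a, A.orderEmbOfFin hA (σ a) = g a := by
  classical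
  set A : Finset (Fin N) := Finset.univ.image g with hAdef
  have hA : A.card = k := by
    rw [hAdef, Finset.card_image_of_injective _ hg, Finset.card_univ, Fintype.card_fin]
  set e := A.orderIsoOfFin hA
  have hmem : ∀ a, g a ∈ A := fun a => by simp [hAdef]
  set σ0 : Fin k → Fin k := fun a => e.symm ⟨g a, hmem a⟩ with hσ0
  have hinj : Function.Injective σ0 := by
    intro a b hab
    have := congrArg (fun x => ((e x : A) : Fin N)) hab
    simp only [hσ0, OrderIso.apply_symm_apply] at this
    exact hg this
  have hbij := (Finite.injective_iff_bijective).mp hinj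
  refine ⟨A, hA, Equiv.ofBijective σ0 hbij, fun a => ?_⟩
  show A.orderEmbOfFin hA (σ0 a) = g a
  rw [← Finset.coe_orderIsoOfFin_apply]
  simp [σ0, e]

lemma sorted_le {N k : ℕ} {g : Fin k → Fin N} {A : Finset (Fin N)} {hA : A.card = k}
    {σ : Equiv.Perm (Fin k)} (hσ : ∀ a, A.orderEmbOfFin hA (σ a) = g a)
    {r : Fin k → Fin N} (hr : StrictMono r) (hle : ∀ a, g a ≤ r a) (p : Fin k) :
    A.orderEmbOfFin hA p ≤ r p := by
  by_contra hcon
  push_neg at hcon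
  have himg : (Finset.Iic p).image σ ⊆ Finset.Iio p := by
    intro q hq
    obtain ⟨b, hb, rfl⟩ := Finset.mem_image.mp hq
    rw [Finset.mem_Iio]
    have h1 : A.orderEmbOfFin hA (σ b) < A.orderEmbOfFin hA p :=
      ((hσ b).le.trans ((hle b).trans (hr.monotone (Finset.mem_Iic.mp hb)))).trans_lt hcon
    exact (A.orderEmbOfFin hA).strictMono.lt_iff_lt.mp h1
  have hcard := Finset.card_le_card himg
  rw [Finset.card_image_of_injective _ σ.injective, Fin.card_Iic, Fin.card_Iio] at hcard
  omega

lemma minorC_eq {N k : ℕ} (X : Matrix (Fin N) (Fin N) ℂ) {A B : Finset (Fin N)}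
    (hA : A.card = k) (hB : B.card = k) :
    minorC X A B = (X.submatrix (A.orderEmbOfFin hA) (B.orderEmbOfFin hB)).det := by
  have h : B.card = A.card := hB.trans hA.symm
  rw [minorC, dif_pos h]
  rw [← Matrix.det_submatrix_equiv_self (finCongr hA.symm)
    (Matrix.of fun (a b : Fin A.card) =>
      X (A.orderEmbOfFin rfl a) (B.orderEmbOfFin h b))]
  congr 1

lemma key {N k : ℕ} (s M : Matrix (Fin N) (Fin N) ℂ)
    (hs : ∀ i j : Fin N, i < j → s i j = 0)
    (R : Finset (Fin N)) (hR : R.card = k) (c : Fin k → Fin N)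
    (hM : ∀ (A : Finset (Fin N)) (hA : A.card = k),
      (∀ p, A.orderEmbOfFin hA p ≤ R.orderEmbOfFin hR p) →
      (M.submatrix (A.orderEmbOfFin hA) c).det = 0) :
    ((s * M).submatrix (R.orderEmbOfFin hR) c).det = 0 := by
  classical
  set r : Fin k → Fin N := ⇑(R.orderEmbOfFin hR) with hrdef
  set f := (Matrix.detRowAlternating : (Fin k → ℂ) [⋀^Fin k]→ₗ[ℂ] ℂ) with hf
  set v : Fin N → (Fin k → ℂ) := fun x b => M x (c b) with hv
  have hexp : ((s * M).submatrix r c).det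
      = f.toMultilinearMap (fun a => ∑ x : Fin N, s (r a) x • v x) := by
    show f _ = f _
    congr 1
    funext a b
    simp [Matrix.mul_apply, v, Finset.sum_apply]
  rw [hexp, f.toMultilinearMap.map_sum (g := fun a x => s (r a) x • v x)]
  apply Finset.sum_eq_zero
  intro g _
  rw [f.toMultilinearMap.map_smul_univ (fun a => s (r a) (g a)) (fun a => v (g a))]
  by_cases hb : ∀ a, g a ≤ r a
  · by_cases hinj : Function.Injective g
    · obtain ⟨A, hA, σ, hσ⟩ := factor g hinj
      have hAle : ∀ p, A.orderEmbOfFin hA p ≤ r p :=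
        sorted_le hσ (R.orderEmbOfFin hR).strictMono hb
      have hmat : ((fun a => v (g a)) : Matrix (Fin k) (Fin k) ℂ)
          = (M.submatrix (⇑(A.orderEmbOfFin hA)) c).submatrix σ id := by
        funext a b
        simp [v, hσ]
      have hdet : Matrix.det ((fun a => v (g a)) : Matrix (Fin k) (Fin k) ℂ) = 0 := by
        rw [hmat, Matrix.det_permute, hM A hA hAle, mul_zero]
      show (∏ a, s (r a) (g a)) • Matrix.det ((fun a => v (g a)) : Matrix (Fin k) (Fin k) ℂ) = 0
      rw [hdet, smul_zero]
    · rw [Function.not_injective_iff] at hinj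
      obtain ⟨a1, a2, heq, hne⟩ := hinj
      have hdet : Matrix.det ((fun a => v (g a)) : Matrix (Fin k) (Fin k) ℂ) = 0 :=
        Matrix.det_zero_of_row_eq hne (show v (g a1) = v (g a2) by rw [heq])
      show (∏ a, s (r a) (g a)) • Matrix.det ((fun a => v (g a)) : Matrix (Fin k) (Fin k) ℂ) = 0
      rw [hdet, smul_zero]
  · push_neg at hb
    obtain ⟨a, ha⟩ := hb
    have hz : (∏ a, s (r a) (g a)) = 0 :=
      Finset.prod_eq_zero (Finset.mem_univ a) (hs _ _ ha)
    rw [hz, zero_smul]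

theorem stmt15 (N k : ℕ) (z t : Matrix (Fin N) (Fin N) ℂ)
    (hz : z.IsHermitian)
    (htriang : ∀ i j : Fin N, j < i → t i j = 0) (htinv : IsUnit t)
    (I J : Finset (Fin N)) (hI : I.card = k) (hJ : J.card = k)
    (hvanish : ∀ I' J' : Finset (Fin N), I'.card = k → J'.card = k →
      pairLexLt J' I' J I → minorC z I' J' = 0) :
    ∀ I' J' : Finset (Fin N), I'.card = k → J'.card = k →
      pairLexLt J' I' J I → minorC (tᴴ * z * t) I' J' = 0 := by
  intro I' J' hI' hJ' hlex
  rw [minorC_eq (tᴴ * z * t) hI' hJ']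
  rw [← Matrix.det_transpose, Matrix.transpose_submatrix]
  have hT : (tᴴ * z * t)ᵀ = tᵀ * (tᴴ * z)ᵀ := by rw [Matrix.transpose_mul]
  rw [hT]
  apply key tᵀ ((tᴴ * z)ᵀ) (fun i j h => htriang j i h) J' hJ' (⇑(I'.orderEmbOfFin hI'))
  intro B hB hBle
  rw [← Matrix.transpose_submatrix, Matrix.det_transpose]
  apply key tᴴ z (fun i j h => by simp [Matrix.conjTranspose_apply, htriang j i h]) I' hI'
    (⇑(B.orderEmbOfFin hB))
  intro A hA hAle
  rw [← minorC_eq z hA hB]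
  apply hvanish A B hA hB
  rcases hlex with h1 | ⟨rfl, h2⟩
  · exact Or.inl (le_lex_trans hB hJ' hJ hBle h1)
  · by_cases hBJ : B = J'
    · exact Or.inr ⟨hBJ, le_lex_trans hA hI' hI hAle h2⟩
    · exact Or.inl (le_ne_lex hB hJ' hBle hBJ)
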